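/- arXiv:1109.1169 — 3 statements merged into one kernel-verified Lean document; each statement's English description precedes it below -/
import Mathlib

section
/- For α, β > -1, the inner product of two Bernstein polynomials with respect to the Jacobi weight is given by ⟨B^n_i, B^m_j⟩ = B(α+1, β+1) · C(n,i) · C(m,j) · (α+1)_{n+m-i-j} (β+1)_{i+j} / (α+β+2)_{n+m}, where B(λ,μ) = Γ(λ)Γ(μ)/Γ(λ+μ) and (c)_k denotes the Pochhammer symbol. -/
open Finset

/-- Pochhammer symbol `(c)_k = c (c+1) ⋯ (c+k-1)`. -/
noncomputable def poch (c : ℝ) (k : ℕ) : ℝ := ∏ j ∈ Finset.range k, (c + j)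

/-- Bernstein polynomial `B^n_i(x)`. -/
noncomputable def bern (n i : ℕ) (x : ℝ) : ℝ := (n.choose i : ℝ) * x ^ i * (1 - x) ^ (n - i)

/-- Jacobi inner product on [0,1]. -/
noncomputable def jip (α β : ℝ) (f g : ℝ → ℝ) : ℝ :=
  ∫ x in (0:ℝ)..1, (1 - x) ^ α * x ^ β * f x * g x

/-- Beta function `B(a,b) = Γ(a)Γ(b)/Γ(a+b)`. -/
noncomputable def betaF (a b : ℝ) : ℝ := Real.Gamma a * Real.Gamma b / Real.Gamma (a + b)

/-- Hahn polynomial `Q_m(x; α, β, N)` as a terminating ₃F₂ sum. -/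
noncomputable def hahn (m : ℕ) (x : ℝ) (α β : ℝ) (N : ℕ) : ℝ :=
  ∑ k ∈ Finset.range (m + 1),
    poch (-(m : ℝ)) k * poch ((m : ℝ) + α + β + 1) k * poch (-x) k /
      ((k.factorial : ℝ) * poch (α + 1) k * poch (-(N : ℝ)) k)

/-- Shifted Jacobi polynomial `R_m^{(α,β)}(x)`. -/
noncomputable def sjac (m : ℕ) (α β : ℝ) (x : ℝ) : ℝ :=
  (poch (α + 1) m / (m.factorial : ℝ)) *
    ∑ k ∈ Finset.range (m + 1),
      poch (-(m : ℝ)) k * poch ((m : ℝ) + α + β + 1) k /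
        ((k.factorial : ℝ) * poch (α + 1) k) * (1 - x) ^ k

/-!
On `(0, 1)` the weight times `B^n_i B^m_j` is `C(n,i) C(m,j) (1-x)^(α+n+m-i-j) x^(β+i+j)`, so the
inner product is a Beta integral `B(α+1+n+m-i-j, β+1+i+j)`. The functional equation
`Γ(c + k) = (c)_k Γ(c)` then splits off `B(α+1, β+1)` and leaves the Pochhammer symbols.
-/

theorem Real.Gamma_add_nat_eq_poch_mul {c : ℝ} (hc : 0 < c) (k : ℕ) :
    Real.Gamma (c + k) = poch c k * Real.Gamma c := by
  induction k with
  | zero => simp [poch]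
  | succ k ih =>
    rw [Nat.cast_succ, ← add_assoc, Real.Gamma_add_one (by positivity), ih]
    simp only [poch, Finset.prod_range_succ]
    ring

theorem poch_pos {c : ℝ} (hc : 0 < c) (k : ℕ) : 0 < poch c k :=
  Finset.prod_pos fun _ _ => by positivity

theorem integral_one_sub_rpow_mul_rpow {a b : ℝ} (ha : -1 < a) (hb : -1 < b) :
    ∫ x in (0:ℝ)..1, (1 - x) ^ a * x ^ b = betaF (a + 1) (b + 1) := by
  have hB := Complex.betaIntegral_eq_Gamma_mul_div (b + 1 : ℝ) (a + 1 : ℝ)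
    (by rw [Complex.ofReal_re]; linarith) (by rw [Complex.ofReal_re]; linarith)
  rw [Complex.betaIntegral, ← Complex.ofReal_add, Complex.Gamma_ofReal, Complex.Gamma_ofReal,
    Complex.Gamma_ofReal] at hB
  rw [betaF, add_comm (a + 1), mul_comm (Real.Gamma (a + 1)), ← Complex.ofReal_inj]
  push_cast at hB ⊢
  rw [← hB, ← intervalIntegral.integral_ofReal]
  refine intervalIntegral.integral_congr fun x hx => ?_
  rw [Set.uIcc_of_le zero_le_one] at hx
  simp only [add_sub_cancel_right]
  rw [Complex.ofReal_mul, Complex.ofReal_cpow hx.1, Complex.ofReal_cpow (sub_nonneg.2 hx.2)]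
  push_cast
  ring

theorem betaF_add_nat_add_nat {a b : ℝ} (ha : 0 < a) (hb : 0 < b) (k l : ℕ) :
    betaF (a + k) (b + l) = betaF a b * poch a k * poch b l / poch (a + b) (k + l) := by
  have hsum : a + k + (b + l) = a + b + (k + l : ℕ) := by push_cast; ring
  have hG := (Real.Gamma_pos_of_pos (add_pos ha hb)).ne'
  have hP := (poch_pos (add_pos ha hb) (k + l)).ne'
  rw [betaF, betaF, hsum, Real.Gamma_add_nat_eq_poch_mul ha, Real.Gamma_add_nat_eq_poch_mul hb,
    Real.Gamma_add_nat_eq_poch_mul (add_pos ha hb)]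
  field_simp

theorem jacobiWeight_mul_bern_mul_bern (α β : ℝ) {x : ℝ} (hx : x ≠ 0) (hx' : x ≠ 1)
    (n m i j : ℕ) :
    (1 - x) ^ α * x ^ β * bern n i x * bern m j x =
      n.choose i * m.choose j * ((1 - x) ^ (α + ↑(n - i + (m - j))) * x ^ (β + ↑(i + j))) := by
  rw [Real.rpow_add_natCast (sub_ne_zero.2 hx'.symm), Real.rpow_add_natCast hx, bern, bern]
  ring

theorem jacobi_inner_product_of_bernstein (α β : ℝ) (hα : α > -1) (hβ : β > -1)
    (n m i j : ℕ) (hi : i ≤ n) (hj : j ≤ m) :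
    jip α β (bern n i) (bern m j) =
      betaF (α + 1) (β + 1) * (n.choose i : ℝ) * (m.choose j : ℝ) *
        poch (α + 1) (n + m - i - j) * poch (β + 1) (i + j) / poch (α + β + 2) (n + m) := by
  have hsplit : n - i + (m - j) = n + m - i - j := by omega
  have hdeg : n + m - i - j + (i + j) = n + m := by omega
  have hweight : α + 1 + (β + 1) = α + β + 2 := by ring
  have hintegrand : ∀ᵐ x, x ∈ Set.uIoc (0:ℝ) 1 →
      (1 - x) ^ α * x ^ β * bern n i x * bern m j x =
        n.choose i * m.choose j * ((1 - x) ^ (α + ↑(n - i + (m - j))) * x ^ (β + ↑(i + j))) := by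
    filter_upwards [MeasureTheory.volume.ae_ne (1:ℝ)] with x hx1 hx
    rw [Set.uIoc_of_le zero_le_one] at hx
    exact jacobiWeight_mul_bern_mul_bern α β hx.1.ne' hx1 n m i j
  rw [jip, intervalIntegral.integral_congr_ae hintegrand, intervalIntegral.integral_const_mul,
    integral_one_sub_rpow_mul_rpow (lt_add_of_lt_of_nonneg hα (Nat.cast_nonneg _))
      (lt_add_of_lt_of_nonneg hβ (Nat.cast_nonneg _)),
    add_right_comm α, add_right_comm β, betaF_add_nat_add_nat (by linarith) (by linarith),
    hsplit, hdeg, hweight]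
  ring
end

section
/- For 0 ≤ i ≤ n, the shifted Jacobi polynomial has the Bernstein expansion R_i^{(α,β)}(x) = ((α+1)_i / i!) · Σ_{j=0}^{n} Q_i(n-j; α, β, n) · B^n_j(x). -/
open Finset

/-
Expand the Hahn polynomial and exchange the two sums. Since `(-m)_k = (-1)^k k! C(m,k)`, the
coefficient of `(1-x)^k` becomes a multiple of `∑_j C(n-j,k) B^n_j(x)`, and
`C(n-j,k) C(n,j) = C(n,k) C(n-k,j)` turns this sum into `C(n,k)` times the binomial expansion
of `(1-x)^k (x + (1-x))^(n-k)`.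
-/

theorem poch_eq_eval_ascPochhammer (c : ℝ) (k : ℕ) :
    poch c k = (ascPochhammer ℝ k).eval c := by
  induction k with
  | zero => simp [poch]
  | succ k ih => rw [poch, prod_range_succ, ← poch, ih, ascPochhammer_succ_eval]

theorem poch_neg_natCast (m k : ℕ) :
    poch (-(m : ℝ)) k = (-1) ^ k * k.factorial * m.choose k := by
  rw [poch_eq_eval_ascPochhammer, ascPochhammer_eval_neg_eq_descPochhammer,
    descPochhammer_eval_eq_descFactorial, Nat.descFactorial_eq_factorial_mul_choose]
  push_cast
  ring

theorem Nat.choose_sub_mul_choose (n j k : ℕ) :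
    (n - j).choose k * n.choose j = n.choose k * (n - k).choose j := by
  have hj := Nat.choose_mul (n := n) (k := j + k) (s := j) (by omega)
  have hk := Nat.choose_mul (n := n) (k := j + k) (s := k) (by omega)
  rw [Nat.add_sub_cancel_left, Nat.choose_symm_add] at hj
  rw [Nat.add_sub_cancel] at hk
  rw [mul_comm, ← hj, hk]

theorem sum_choose_sub_mul_bern {n k : ℕ} (hk : k ≤ n) (x : ℝ) :
    ∑ j ∈ range (n + 1), ((n - j).choose k : ℝ) * bern n j x = n.choose k * (1 - x) ^ k := by
  obtain ⟨m, rfl⟩ := Nat.exists_eq_add_of_le' hk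
  have hterm : ∀ j, ((m + k - j).choose k : ℝ) * bern (m + k) j x =
      (m + k).choose k * (m.choose j * x ^ j * (1 - x) ^ (m + k - j)) := by
    intro j
    have := Nat.choose_sub_mul_choose (m + k) j k
    rw [Nat.add_sub_cancel] at this
    rw [bern, ← mul_assoc, ← mul_assoc, ← mul_assoc, ← Nat.cast_mul, this]
    push_cast
    ring
  simp_rw [hterm, ← mul_sum]
  congr 1
  rw [← sum_subset (range_subset_range.2 (by omega : m + 1 ≤ m + k + 1)) fun j _ hj ↦ by
    rw [Nat.choose_eq_zero_of_lt (by simpa using hj), Nat.cast_zero, zero_mul, zero_mul]]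
  calc ∑ j ∈ range (m + 1), (m.choose j : ℝ) * x ^ j * (1 - x) ^ (m + k - j)
      = ∑ j ∈ range (m + 1), x ^ j * (1 - x) ^ (m - j) * m.choose j * (1 - x) ^ k :=
        sum_congr rfl fun j hj ↦ by
          rw [Nat.sub_add_comm (by simpa [Nat.lt_succ_iff] using hj), pow_add]
          ring
    _ = (1 - x) ^ k := by rw [← sum_mul, ← add_pow, add_sub_cancel, one_pow, one_mul]

theorem poch_neg_natCast_ne_zero {n k : ℕ} (hk : k ≤ n) : poch (-(n : ℝ)) k ≠ 0 := by
  rw [poch_neg_natCast]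
  have := Nat.choose_pos hk
  positivity

theorem sum_poch_neg_sub_mul_bern {n k : ℕ} (hk : k ≤ n) (x : ℝ) :
    ∑ j ∈ range (n + 1), poch (-((n : ℝ) - j)) k * bern n j x =
      poch (-(n : ℝ)) k * (1 - x) ^ k := by
  calc ∑ j ∈ range (n + 1), poch (-((n : ℝ) - j)) k * bern n j x
      = ∑ j ∈ range (n + 1), (-1) ^ k * k.factorial * (((n - j).choose k : ℝ) * bern n j x) :=
        sum_congr rfl fun j hj ↦ by
          rw [← Nat.cast_sub (by simpa [Nat.lt_succ_iff] using hj), poch_neg_natCast]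
          ring
    _ = poch (-(n : ℝ)) k * (1 - x) ^ k := by
      rw [← mul_sum, sum_choose_sub_mul_bern hk, poch_neg_natCast]
      ring

theorem jacobi_in_bernstein_basis (α β : ℝ) (n i : ℕ) (hi : i ≤ n) (x : ℝ) :
    sjac i α β x =
      (poch (α + 1) i / (i.factorial : ℝ)) *
        ∑ j ∈ Finset.range (n + 1), hahn i ((n : ℝ) - (j : ℝ)) α β n * bern n j x := by
  rw [sjac]
  congr 1
  simp_rw [hahn, sum_mul]
  rw [sum_comm]
  refine (sum_congr rfl fun k hk ↦ ?_).symm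
  have hkn : k ≤ n := (Nat.lt_succ_iff.1 (mem_range.1 hk)).trans hi
  calc _ = poch (-(i : ℝ)) k * poch ((i : ℝ) + α + β + 1) k /
          ((k.factorial : ℝ) * poch (α + 1) k * poch (-(n : ℝ)) k) *
          ∑ j ∈ range (n + 1), poch (-((n : ℝ) - j)) k * bern n j x := by
        rw [mul_sum]
        exact sum_congr rfl fun j _ ↦ by ring
    _ = _ := by
      rw [sum_poch_neg_sub_mul_bern hkn]
      field_simp [poch_neg_natCast_ne_zero hkn]
end

section
/- For i = k, ..., n-l, the constrained dual Bernstein polynomial factors as D^{(n,k,l)}_i(x; α, β) = U_i · x^k (1-x)^l · D^{n-k-l}_{i-k}(x; α+2l, β+2k), where U_i = C(n-k-l, i-k) / C(n, i). -/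
/-!
The conditions at `0` and `1` say that `D^{(n,k,l)}_i = x^k (1 - x)^l P` with `deg P ≤ n - k - l`.
Since `B^n_{s+k} = C(n, s+k) / C(n-k-l, s) · x^k (1 - x)^l B^{n-k-l}_s`, the factor
`x^{2k} (1 - x)^{2l}` moves into the weight, and the duality relations of `D^{(n,k,l)}_i` become
relations for `P` against the Bernstein basis of degree `n - k - l` in the inner product with
parameters `(α + 2l, β + 2k)`; `U_i D^{n-k-l}_{i-k}` satisfies the same relations. Bernstein
polynomials of degree `m` span the polynomials of degree `≤ m` and the inner product is
definite, so these relations determine `P`.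
-/

open Finset

open MeasureTheory Polynomial Set

theorem Polynomial.X_sub_C_pow_dvd_of_iterate_derivative_eval_eq_zero {R : Type*} [CommRing R]
    [IsDomain R] [CharZero R] {p : R[X]} {t : R} {k : ℕ}
    (h : ∀ r < k, (derivative^[r] p).eval t = 0) : (X - C t) ^ k ∣ p := by
  rcases eq_or_ne p 0 with rfl | hp
  · exact dvd_zero _
  rw [← le_rootMultiplicity_iff hp]
  cases k with
  | zero => exact Nat.zero_le _
  | succ r =>
    exact (lt_rootMultiplicity_iff_isRoot_iterate_derivative hp).2 fun m hm =>
      h m (Nat.lt_succ_of_le hm)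

theorem Polynomial.natDegree_one_sub_X {R : Type*} [Ring R] [Nontrivial R] :
    ((1 : R[X]) - X).natDegree = 1 := by
  rw [natDegree_sub_eq_right_of_natDegree_lt] <;> simp

theorem Polynomial.exists_eq_X_pow_mul_one_sub_X_pow_mul {R : Type*} [CommRing R] [IsDomain R]
    [CharZero R] {p : R[X]} {k l m : ℕ}
    (hdeg : p.natDegree ≤ k + l + m)
    (h0 : ∀ r < k, (derivative^[r] p).eval 0 = 0)
    (h1 : ∀ r < l, (derivative^[r] p).eval 1 = 0) :
    ∃ q : R[X], q.natDegree ≤ m ∧ p = X ^ k * (1 - X) ^ l * q := by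
  have hX : X ^ k ∣ p := by
    simpa using X_sub_C_pow_dvd_of_iterate_derivative_eval_eq_zero h0
  have hX1 : (1 - X) ^ l ∣ p :=
    (pow_dvd_pow_of_dvd ⟨-1, by simp⟩ l).trans
      (X_sub_C_pow_dvd_of_iterate_derivative_eval_eq_zero h1)
  have hcop : IsCoprime (X ^ k : R[X]) ((1 - X) ^ l) := IsCoprime.pow ⟨1, 1, by ring⟩
  obtain ⟨q, rfl⟩ := hcop.mul_dvd hX hX1
  refine ⟨q, ?_, rfl⟩
  rcases eq_or_ne q 0 with rfl | hq
  · simp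
  have h1X : (1 - X : R[X]) ≠ 0 :=
    ne_zero_of_natDegree_gt (n := 0) (by simp [natDegree_one_sub_X])
  rw [natDegree_mul (mul_ne_zero (pow_ne_zero _ X_ne_zero) (pow_ne_zero _ h1X)) hq,
    natDegree_mul (pow_ne_zero _ X_ne_zero) (pow_ne_zero _ h1X), natDegree_X_pow, natDegree_pow,
    natDegree_one_sub_X] at hdeg
  omega

theorem continuous_bern (n i : ℕ) : Continuous (bern n i) := by
  unfold bern
  fun_prop

theorem pow_eq_sum_bern {m j : ℕ} (hj : j ≤ m) (x : ℝ) :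
    x ^ j = ∑ t ∈ range (m - j + 1),
      ((m - j).choose t / m.choose (t + j) : ℝ) * bern m (t + j) x := by
  calc x ^ j = x ^ j * (x + (1 - x)) ^ (m - j) := by simp
    _ = _ := by
      rw [add_pow, Finset.mul_sum]
      refine Finset.sum_congr rfl fun t ht => ?_
      have htm : t + j ≤ m := by rw [Finset.mem_range] at ht; omega
      have hch : (m.choose (t + j) : ℝ) ≠ 0 := Nat.cast_ne_zero.2 (Nat.choose_pos htm).ne'
      rw [bern, show m - (t + j) = m - j - t by omega, pow_add]
      field_simp

-- One factor `x ^ k (1 - x) ^ l` comes from the first argument, the other from the Bernstein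
-- polynomial: together they shift the Jacobi parameters by `(2 l, 2 k)`.
theorem jip_shift_bern (α β : ℝ) {k l m s : ℕ} (hs : s ≤ m) (g : ℝ → ℝ) :
    jip (α + 2 * l) (β + 2 * k) g (bern m s) = (m.choose s / (k + l + m).choose (s + k) : ℝ) *
      jip α β (fun x => x ^ k * (1 - x) ^ l * g x) (bern (k + l + m) (s + k)) := by
  have hn : ((k + l + m).choose (s + k) : ℝ) ≠ 0 :=
    Nat.cast_ne_zero.2 (Nat.choose_pos (by omega)).ne'
  rw [jip, jip, ← intervalIntegral.integral_const_mul]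
  refine intervalIntegral.integral_congr_ae ?_
  filter_upwards [volume.ae_ne 1] with x hx1 hx
  rw [Set.uIoc_of_le zero_le_one] at hx
  have hx0 : 0 < x := hx.1
  have hx1' : 0 < 1 - x := sub_pos.2 (lt_of_le_of_ne hx.2 hx1)
  have hshift : ∀ {y c : ℝ} (j : ℕ), 0 < y → y ^ (c + 2 * (j : ℝ)) = y ^ c * (y ^ j * y ^ j) :=
    fun j hy => by
      rw [Real.rpow_add hy, ← pow_add, ← two_mul, ← Real.rpow_natCast]
      push_cast
      ring
  rw [hshift l hx1', hshift k hx0, bern, bern, show k + l + m - (s + k) = l + (m - s) by omega,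
    pow_add, pow_add]
  field_simp

section JacobiInnerProduct

variable {a b : ℝ}

theorem intervalIntegrable_jacobiWeight_zero_half (hb : -1 < b) :
    IntervalIntegrable (fun x : ℝ => (1 - x) ^ a * x ^ b) volume 0 (1 / 2) := by
  refine (intervalIntegral.intervalIntegrable_rpow' hb).continuousOn_mul ?_
  refine ContinuousOn.rpow_const (by fun_prop) fun x hx => Or.inl ?_
  rw [Set.uIcc_of_le (by norm_num)] at hx
  linarith [hx.2]

theorem intervalIntegrable_jacobiWeight (ha : -1 < a) (hb : -1 < b) :
    IntervalIntegrable (fun x : ℝ => (1 - x) ^ a * x ^ b) volume 0 1 := by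
  have hright := (intervalIntegrable_jacobiWeight_zero_half (a := b) ha).comp_sub_left 1
  norm_num at hright
  simp_rw [mul_comm (_ ^ b)] at hright
  exact (intervalIntegrable_jacobiWeight_zero_half hb).trans hright.symm

theorem intervalIntegrable_jip (ha : -1 < a) (hb : -1 < b) {f g : ℝ → ℝ}
    (hf : Continuous f) (hg : Continuous g) :
    IntervalIntegrable (fun x : ℝ => (1 - x) ^ a * x ^ b * f x * g x) volume 0 1 :=
  ((intervalIntegrable_jacobiWeight ha hb).mul_continuousOn hf.continuousOn).mul_continuousOn
    hg.continuousOn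

theorem jip_const_mul_left (c : ℝ) (f g : ℝ → ℝ) :
    jip a b (fun x => c * f x) g = c * jip a b f g := by
  rw [jip, jip, ← intervalIntegral.integral_const_mul]
  congr 1 with x
  ring

theorem jip_sub_left (ha : -1 < a) (hb : -1 < b) {f₁ f₂ g : ℝ → ℝ}
    (hf₁ : Continuous f₁) (hf₂ : Continuous f₂) (hg : Continuous g) :
    jip a b (fun x => f₁ x - f₂ x) g = jip a b f₁ g - jip a b f₂ g := by
  rw [jip, jip, jip, ← intervalIntegral.integral_sub (intervalIntegrable_jip ha hb hf₁ hg)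
    (intervalIntegrable_jip ha hb hf₂ hg)]
  congr 1 with x
  ring

theorem jip_sum_right (ha : -1 < a) (hb : -1 < b) {ι : Type*} (s : Finset ι) (c : ι → ℝ)
    {f : ℝ → ℝ} {g : ι → ℝ → ℝ} (hf : Continuous f) (hg : ∀ t ∈ s, Continuous (g t)) :
    jip a b f (fun x => ∑ t ∈ s, c t * g t x) = ∑ t ∈ s, c t * jip a b f (g t) := by
  simp only [jip, ← intervalIntegral.integral_const_mul]
  rw [← intervalIntegral.integral_finsetSum fun t ht =>
    (intervalIntegrable_jip ha hb hf (hg t ht)).const_mul (c t)]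
  congr 1 with x
  rw [Finset.mul_sum]
  exact Finset.sum_congr rfl fun t _ => by ring

theorem jip_eval_eq_zero_of_forall_jip_bern_eq_zero (ha : -1 < a) (hb : -1 < b) {f : ℝ → ℝ}
    (hf : Continuous f) {m : ℕ} (h : ∀ s ≤ m, jip a b f (bern m s) = 0) {p : ℝ[X]}
    (hp : p.natDegree ≤ m) : jip a b f (fun x => p.eval x) = 0 := by
  have hpow : ∀ j ≤ m, jip a b f (fun x => x ^ j) = 0 := fun j hj => by
    simp_rw [pow_eq_sum_bern hj]
    rw [jip_sum_right ha hb _ _ hf fun t _ => continuous_bern m (t + j)]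
    refine Finset.sum_eq_zero fun t ht => ?_
    rw [h _ (by rw [Finset.mem_range] at ht; omega), mul_zero]
  simp_rw [eval_eq_sum_range' (Nat.lt_succ_of_le hp)]
  rw [jip_sum_right ha hb _ _ hf fun j _ => continuous_pow j]
  refine Finset.sum_eq_zero fun j hj => ?_
  rw [hpow j (Nat.lt_succ_iff.1 (Finset.mem_range.1 hj)), mul_zero]

theorem eq_zero_of_jip_self_eq_zero (ha : -1 < a) (hb : -1 < b) {p : ℝ[X]}
    (h : jip a b (fun x => p.eval x) (fun x => p.eval x) = 0) : p = 0 := by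
  set F : ℝ → ℝ := fun x => (1 - x) ^ a * x ^ b * p.eval x * p.eval x
  have hnonneg : 0 ≤ᵐ[volume.restrict (Ioc 0 1 ∪ Ioc 1 0)] F := by
    rw [Set.Ioc_eq_empty (by norm_num : ¬(1 : ℝ) < 0), Set.union_empty]
    filter_upwards [ae_restrict_mem measurableSet_Ioc] with x hx
    have hw : 0 ≤ (1 - x) ^ a * x ^ b :=
      mul_nonneg (Real.rpow_nonneg (sub_nonneg.2 hx.2) a) (Real.rpow_nonneg hx.1.le b)
    simpa only [F, Pi.zero_apply, mul_assoc] using mul_nonneg hw (mul_self_nonneg (p.eval x))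
  have hF : F =ᵐ[volume.restrict (Ioc 0 1 ∪ Ioc 1 0)] 0 :=
    (intervalIntegral.integral_eq_zero_iff_of_nonneg_ae hnonneg
      (intervalIntegrable_jip ha hb p.continuous p.continuous)).1 h
  have hcont : ContinuousOn F (Ioo 0 1) := by
    refine ((ContinuousOn.mul ?_ ?_).mul p.continuous.continuousOn).mul p.continuous.continuousOn
    · exact ContinuousOn.rpow_const (by fun_prop) fun x hx => Or.inl (sub_pos.2 hx.2).ne'
    · exact ContinuousOn.rpow_const (by fun_prop) fun x hx => Or.inl hx.1.ne'
  have hFzero : EqOn F 0 (Ioo 0 1) :=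
    Measure.eqOn_open_of_ae_eq (ae_restrict_of_ae_restrict_of_subset
      (Ioo_subset_Ioc_self.trans subset_union_left) hF) isOpen_Ioo hcont continuousOn_const
  refine p.eq_zero_of_infinite_isRoot ((Ioo_infinite zero_lt_one).mono fun x hx => ?_)
  have hw : (1 - x) ^ a * x ^ b ≠ 0 :=
    mul_ne_zero (Real.rpow_pos_of_pos (sub_pos.2 hx.2) a).ne' (Real.rpow_pos_of_pos hx.1 b).ne'
  have hFx : (1 - x) ^ a * x ^ b * (p.eval x * p.eval x) = 0 := by
    simpa only [F, Pi.zero_apply, mul_assoc] using hFzero hx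
  exact mul_self_eq_zero.1 ((mul_eq_zero.1 hFx).resolve_left hw)

theorem eq_of_forall_jip_bern_eq (ha : -1 < a) (hb : -1 < b) {m : ℕ} {p q : ℝ[X]}
    (hp : p.natDegree ≤ m) (hq : q.natDegree ≤ m)
    (h : ∀ s ≤ m,
      jip a b (fun x => p.eval x) (bern m s) = jip a b (fun x => q.eval x) (bern m s)) :
    p = q := by
  have hr : (p - q).natDegree ≤ m := (natDegree_sub_le p q).trans (max_le hp hq)
  have horth : ∀ s ≤ m, jip a b (fun x => (p - q).eval x) (bern m s) = 0 := fun s hs => by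
    simp only [eval_sub]
    rw [jip_sub_left ha hb p.continuous q.continuous (continuous_bern m s), h s hs, sub_self]
  refine sub_eq_zero.1 (eq_zero_of_jip_self_eq_zero ha hb ?_)
  exact jip_eval_eq_zero_of_forall_jip_bern_eq_zero ha hb (p - q).continuous horth hr

end JacobiInnerProduct

theorem constrained_dual_bernstein_factorization (α β : ℝ) (hα : α > -1) (hβ : β > -1)
    (n k l i : ℕ) (hkl : k + l ≤ n) (hik : k ≤ i) (hil : i ≤ n - l)
    (Dc : Polynomial ℝ) (hdeg : Dc.natDegree ≤ n)
    (h0 : ∀ r < k, (Polynomial.derivative^[r] Dc).eval 0 = 0)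
    (h1 : ∀ r < l, (Polynomial.derivative^[r] Dc).eval 1 = 0)
    (hdual : ∀ j, k ≤ j → j ≤ n - l →
      jip α β (fun x => Dc.eval x) (bern n j) = if i = j then 1 else 0)
    (Du : Polynomial ℝ) (hdegu : Du.natDegree ≤ n - k - l)
    (hdualu : ∀ s ≤ n - k - l,
      jip (α + 2 * l) (β + 2 * k) (fun x => Du.eval x) (bern (n - k - l) s) =
        if i - k = s then 1 else 0)
    (x : ℝ) :
    Dc.eval x =
      ((((n - k - l).choose (i - k) : ℝ)) / (n.choose i : ℝ)) *
        (x ^ k * (1 - x) ^ l) * Du.eval x := by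
  obtain ⟨m, rfl⟩ : ∃ m, n = k + l + m := ⟨n - k - l, by omega⟩
  obtain ⟨j, rfl⟩ : ∃ j, i = j + k := ⟨i - k, by omega⟩
  simp only [show k + l + m - k - l = m by omega, Nat.add_sub_cancel] at hdegu hdualu ⊢
  obtain ⟨P, hPdeg, rfl⟩ := exists_eq_X_pow_mul_one_sub_X_pow_mul hdeg h0 h1
  have hP : P = C (m.choose j / (k + l + m).choose (j + k) : ℝ) * Du := by
    have hα' : -1 < α + 2 * l := by linarith [(l.cast_nonneg : (0 : ℝ) ≤ l)]
    have hβ' : -1 < β + 2 * k := by linarith [(k.cast_nonneg : (0 : ℝ) ≤ k)]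
    refine eq_of_forall_jip_bern_eq hα' hβ' hPdeg ((natDegree_C_mul_le _ _).trans hdegu)
      fun s hs => ?_
    simp only [eval_mul, eval_pow, eval_X, eval_sub, eval_one, eval_C] at hdual ⊢
    rw [jip_shift_bern α β hs, hdual (s + k) (by omega) (by omega), jip_const_mul_left,
      hdualu s hs]
    by_cases hjs : j = s <;> simp [hjs]
  rw [hP]
  simp only [eval_mul, eval_C, eval_pow, eval_X, eval_sub, eval_one]
  ring
end
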